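/- arXiv:math/0405186 — 3 statements merged into one kernel-verified Lean document; each statement's English description precedes it below -/
import Mathlib

section
/- With the same setup, (Pν_n)(0) = W · Σ_{k=1}^{n+1} p_k^{{0}}(0,0), where p_k^{{0}}(0,0) is the probability that the chain started at 0 returns to 0 for the first time at step k. In particular, if the chain is transient from 0 (i.e., a := Σ_{k=1}^{∞} p_k^{{0}}(0,0) < 1), then (Pν_n)(0) ≤ aW for all n. -/
open scoped BigOperators

/-- `f k j` is the taboo (first-visit) probability that the chain started at `j`
visits `z` for the first time at step `k`. -/
theorem stmt_8 {S : Type*} [Countable S] [DecidableEq S] (z : S) (P : S → S → ℝ)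
    (hP0 : ∀ i j, 0 ≤ P i j)
    (hPfin : ∀ i, (Function.support (P i)).Finite)
    (hPsum : ∀ i, ∑ᶠ j, P i j = 1)
    (W : ℝ) (hW : 0 ≤ W)
    (ν : ℕ → S → ℝ)
    (hν0z : ν 0 z = W) (hν0 : ∀ i, i ≠ z → ν 0 i = 0)
    (hrecz : ∀ n, ν (n + 1) z =
      (∑ᶠ j, P z j * ν n j) + max (W - ∑ᶠ j, P z j * ν n j) 0)
    (hrec : ∀ n, ∀ i, i ≠ z → ν (n + 1) i = ∑ᶠ j, P i j * ν n j)
    (f : ℕ → S → ℝ)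
    (hf1 : ∀ j, f 1 j = P j z)
    (hfrec : ∀ k, 1 ≤ k → ∀ j, f (k + 1) j = ∑ᶠ x, (if x = z then 0 else P j x * f k x)) :
    (∀ n, (∑ᶠ j, P z j * ν n j) = W * ∑ k ∈ Finset.Icc 1 (n + 1), f k z) ∧
    (Summable (fun k => f (k + 1) z) → (∑' k, f (k + 1) z) < 1 →
      ∀ n, (∑ᶠ j, P z j * ν n j) ≤ (∑' k, f (k + 1) z) * W) := by
  classical
  -- finite support sets
  set s : S → Finset S := fun i => insert z (hPfin i).toFinset with hs
  have hzs : ∀ i, z ∈ s i := fun i => Finset.mem_insert_self _ _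
  have hsupp : ∀ i, Function.support (P i) ⊆ ↑(s i) := by
    intro i x hx
    simp only [hs, Finset.coe_insert, Set.mem_insert_iff, Set.Finite.coe_toFinset]
    exact Or.inr hx
  have hsum1 : ∀ i, ∑ x ∈ s i, P i x = 1 := by
    intro i
    rw [← finsum_eq_finset_sum_of_support_subset _ (hsupp i)]
    exact hPsum i
  have hsplit : ∀ (i : S) (g : S → ℝ),
      ∑ x ∈ s i, g x = ∑ x ∈ s i \ {z}, g x + g z := by
    intro i g
    exact Finset.sum_eq_sum_sdiff_singleton_add (hzs i) g
  have hne : ∀ {i x : S}, x ∈ s i \ {z} → x ≠ z := by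
    intro i x hx
    exact Finset.notMem_singleton.mp (Finset.mem_sdiff.mp hx).2
  -- rewrite f recursion as finite sums
  have hfrec' : ∀ k j, f (k + 2) j =
      ∑ x ∈ s j, (if x = z then 0 else P j x * f (k + 1) x) := by
    intro k j
    rw [hfrec (k + 1) (by omega) j]
    apply finsum_eq_finset_sum_of_support_subset
    intro x hx
    apply hsupp j
    simp only [Function.mem_support] at hx ⊢
    intro h
    apply hx
    split <;> simp [h]
  -- nonnegativity of f (k+1)
  have hfnn : ∀ k j, 0 ≤ f (k + 1) j := by
    intro k
    induction k with
    | zero => intro j; rw [hf1]; exact hP0 j z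
    | succ k ih =>
      intro j
      rw [hfrec' k j]
      apply Finset.sum_nonneg
      intro x _
      split
      · exact le_refl 0
      · exact mul_nonneg (hP0 j x) (ih x)
  -- partial sums
  set G : ℕ → S → ℝ := fun m j => ∑ i ∈ Finset.range m, f (i + 1) j with hG
  have hGdef : ∀ m j, G m j = ∑ i ∈ Finset.range m, f (i + 1) j := fun _ _ => rfl
  have hGnn : ∀ m j, 0 ≤ G m j := by
    intro m j
    rw [hGdef]
    exact Finset.sum_nonneg fun i _ => hfnn i j
  have hGrec : ∀ m j, G (m + 1) j =
      (∑ x ∈ s j, if x = z then 0 else P j x * G m x) + P j z := by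
    intro m j
    rw [hGdef]
    rw [Finset.sum_range_succ' (fun i => f (i + 1) j) m, hf1]
    congr 1
    calc ∑ i ∈ Finset.range m, f (i + 1 + 1) j
        = ∑ i ∈ Finset.range m, ∑ x ∈ s j, (if x = z then 0 else P j x * f (i + 1) x) := by
          apply Finset.sum_congr rfl
          intro i _
          exact hfrec' i j
      _ = ∑ x ∈ s j, ∑ i ∈ Finset.range m, (if x = z then 0 else P j x * f (i + 1) x) :=
          Finset.sum_comm
      _ = ∑ x ∈ s j, (if x = z then 0 else P j x * G m x) := by
          apply Finset.sum_congr rfl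
          intro x _
          by_cases hx : x = z
          · simp [hx]
          · simp only [hx, if_false, hGdef, Finset.mul_sum]
  have hGle : ∀ m j, G m j ≤ 1 := by
    intro m
    induction m with
    | zero => intro j; rw [hGdef]; simp
    | succ m ih =>
      intro j
      rw [hGrec m j]
      have h1 : (∑ x ∈ s j, if x = z then 0 else P j x * G m x) ≤
          ∑ x ∈ s j, (if x = z then 0 else P j x) := by
        apply Finset.sum_le_sum
        intro x _
        by_cases hx : x = z
        · simp [hx]
        · simp only [hx, if_false]
          calc P j x * G m x ≤ P j x * 1 :=
                mul_le_mul_of_nonneg_left (ih x) (hP0 j x)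
            _ = P j x := mul_one _
      have h2 : (∑ x ∈ s j, if x = z then 0 else P j x) + P j z = 1 := by
        rw [hsplit j (fun x => if x = z then (0:ℝ) else P j x), if_pos rfl, add_zero,
          ← hsum1 j, hsplit j (fun x => P j x)]
        congr 1
        apply Finset.sum_congr rfl
        intro x hx
        rw [if_neg (hne hx)]
      linarith
  -- the transition-sum computation, assuming the invariant at time n
  have step : ∀ n, (∀ j, ν n j = if j = z then W else W * G n j) →
      ∀ i, (∑ᶠ j, P i j * ν n j) = W * G (n + 1) i := by
    intro n ihn i
    have hsub : Function.support (fun j => P i j * ν n j) ⊆ ↑(s i) := by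
      intro x hx
      apply hsupp i
      simp only [Function.mem_support] at hx ⊢
      intro h; apply hx; rw [h, zero_mul]
    rw [finsum_eq_finset_sum_of_support_subset _ hsub,
      hsplit i (fun j => P i j * ν n j), ihn z, if_pos rfl,
      hGrec n i, hsplit i (fun x => if x = z then (0:ℝ) else P i x * G n x),
      if_pos rfl, add_zero]
    have l1 : ∑ x ∈ s i \ {z}, P i x * ν n x
        = W * ∑ x ∈ s i \ {z}, (if x = z then (0:ℝ) else P i x * G n x) := by
      rw [Finset.mul_sum]
      apply Finset.sum_congr rfl
      intro x hx
      rw [ihn x, if_neg (hne hx), if_neg (hne hx)]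
      ring
    rw [l1]
    ring
  -- the main invariant
  have key : ∀ n, ∀ j, ν n j = if j = z then W else W * G n j := by
    intro n
    induction n with
    | zero =>
      intro j
      by_cases hj : j = z
      · simp [hj, hν0z]
      · rw [if_neg hj, hν0 j hj, hGdef]
        simp
    | succ n ih =>
      intro j
      by_cases hj : j = z
      · subst hj
        rw [hrecz n, step n ih j, if_pos rfl]
        have hle : W * G (n + 1) j ≤ W :=
          calc W * G (n + 1) j ≤ W * 1 := mul_le_mul_of_nonneg_left (hGle (n+1) j) hW
            _ = W := mul_one _
        rw [max_eq_left (by linarith)]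
        ring
      · rw [hrec n j hj, step n ih j, if_neg hj]
  have mainstep : ∀ n, (∑ᶠ j, P z j * ν n j) = W * G (n + 1) z :=
    fun n => step n (key n) z
  have hIcc : ∀ n, ∑ k ∈ Finset.Icc 1 (n + 1), f k z = G (n + 1) z := by
    intro n
    induction n with
    | zero =>
      rw [hGdef]
      simp
    | succ n ih =>
      rw [Finset.sum_Icc_succ_top (by omega : 1 ≤ n + 1 + 1), ih,
        hGdef (n + 1 + 1) z, Finset.sum_range_succ, ← hGdef (n + 1) z]
  constructor
  · intro n
    rw [mainstep n, hIcc n]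
  · intro hsummable _ n
    rw [mainstep n, mul_comm]
    have hG' : G (n + 1) z ≤ ∑' k, f (k + 1) z := by
      rw [hGdef]
      exact Summable.sum_le_tsum (Finset.range (n + 1)) (fun i _ => hfnn i z) hsummable
    exact mul_le_mul_of_nonneg_right hG' hW
end

section
/- Decomposition lemma: Let P be a row-stochastic kernel on a countable set S with finitely supported rows, fix i ∈ S, and let W : S → [0,∞) be a nonnegative wall. Define W^i(j) = W(j) for j ≠ i and W^i(i) = 0 with the convention that the recursion at site i for wall W^i omits the positive-part term (no wall at i), and W_i(j) = 0 for j ≠ i (no wall) and W_i(i) = W(i). Define ν^V by ν^V_0(j) = V(j) if site j has a wall and 0 otherwise, and ν^V_n(j) = (Pν^V_{n−1})(j) + (V(j) − (Pν^V_{n−1})(j))⁺ at wall sites, ν^V_n(j) = (Pν^V_{n−1})(j) at non-wall sites. Then for all n and all j: max(ν^{W^i}_n(j), ν^{W_i}_n(j)) ≤ ν^W_n(j) ≤ ν^{W^i}_n(j) + ν^{W_i}_n(j). -/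
open scoped BigOperators

theorem stmt_10 {S : Type*} [Countable S] [DecidableEq S] (P : S → S → ℝ)
    (hP0 : ∀ i j, 0 ≤ P i j)
    (hPfin : ∀ i, (Function.support (P i)).Finite)
    (hPsum : ∀ i, ∑ᶠ j, P i j = 1)
    (i : S) (W : S → ℝ) (hW : ∀ j, 0 ≤ W j)
    (νW νWi νwi : ℕ → S → ℝ)
    -- process with the full wall W (wall at every site)
    (hνW0 : ∀ j, νW 0 j = W j)
    (hνWrec : ∀ n j, νW (n + 1) j =
      (∑ᶠ k, P j k * νW n k) + max (W j - ∑ᶠ k, P j k * νW n k) 0)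
    -- process with the wall W^i (wall at every site except i, where there is no wall)
    (hνWi0 : ∀ j, νWi 0 j = if j = i then 0 else W j)
    (hνWirec : ∀ n j, νWi (n + 1) j =
      if j = i then (∑ᶠ k, P j k * νWi n k)
      else (∑ᶠ k, P j k * νWi n k) + max (W j - ∑ᶠ k, P j k * νWi n k) 0)
    -- process with the wall W_i (wall only at site i)
    (hνwi0 : ∀ j, νwi 0 j = if j = i then W i else 0)
    (hνwirec : ∀ n j, νwi (n + 1) j =
      if j = i then (∑ᶠ k, P j k * νwi n k) + max (W i - ∑ᶠ k, P j k * νwi n k) 0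
      else (∑ᶠ k, P j k * νwi n k)) :
    ∀ n j, max (νWi n j) (νwi n j) ≤ νW n j ∧ νW n j ≤ νWi n j + νwi n j := by
  -- rewrite finsums as finite sums
  have hsum : ∀ (j : S) (f : S → ℝ),
      ∑ᶠ k, P j k * f k = ∑ k ∈ (hPfin j).toFinset, P j k * f k := by
    intro j f
    apply finsum_eq_finset_sum_of_support_subset
    intro k hk
    simp only [Function.mem_support] at hk
    simp only [Set.Finite.coe_toFinset, Function.mem_support]
    intro h
    exact hk (by rw [h, zero_mul])
  have mono : ∀ (j : S) (f g : S → ℝ), (∀ k, f k ≤ g k) →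
      ∑ᶠ k, P j k * f k ≤ ∑ᶠ k, P j k * g k := by
    intro j f g h
    rw [hsum, hsum]
    exact Finset.sum_le_sum fun k _ => mul_le_mul_of_nonneg_left (h k) (hP0 j k)
  have nonneg : ∀ (j : S) (f : S → ℝ), (∀ k, 0 ≤ f k) → 0 ≤ ∑ᶠ k, P j k * f k := by
    intro j f h
    rw [hsum]
    exact Finset.sum_nonneg fun k _ => mul_nonneg (hP0 j k) (h k)
  have addle : ∀ (j : S) (f g h : S → ℝ), (∀ k, f k ≤ g k + h k) →
      ∑ᶠ k, P j k * f k ≤ (∑ᶠ k, P j k * g k) + ∑ᶠ k, P j k * h k := by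
    intro j f g h hfg
    rw [hsum, hsum, hsum, ← Finset.sum_add_distrib]
    refine Finset.sum_le_sum fun k _ => ?_
    rw [← mul_add]
    exact mul_le_mul_of_nonneg_left (hfg k) (hP0 j k)
  -- nonnegativity of νWi and νwi
  have hWi_nonneg : ∀ n j, 0 ≤ νWi n j := by
    intro n
    induction n with
    | zero =>
      intro j; rw [hνWi0]; split
      · exact le_refl 0
      · exact hW j
    | succ n ih =>
      intro j; rw [hνWirec]; split
      · exact nonneg j _ ih
      · have := nonneg j _ ih
        have h2 : (0:ℝ) ≤ max (W j - ∑ᶠ k, P j k * νWi n k) 0 := le_max_right _ _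
        linarith
  have hwi_nonneg : ∀ n j, 0 ≤ νwi n j := by
    intro n
    induction n with
    | zero =>
      intro j; rw [hνwi0]; split
      · exact hW i
      · exact le_refl 0
    | succ n ih =>
      intro j; rw [hνwirec]; split
      · have := nonneg j _ ih
        have h2 : (0:ℝ) ≤ max (W i - ∑ᶠ k, P j k * νwi n k) 0 := le_max_right _ _
        linarith
      · exact nonneg j _ ih
  -- main induction
  intro n
  induction n with
  | zero =>
    intro j
    rw [hνW0, hνWi0, hνwi0]
    by_cases hj : j = i
    · simp only [hj, if_pos rfl]
      constructor
      · simp [hW i]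
      · simp
    · simp only [if_neg hj]
      constructor
      · simp [hW j]
      · simp
  | succ n ih =>
    intro j
    set a := ∑ᶠ k, P j k * νWi n k with ha
    set b := ∑ᶠ k, P j k * νwi n k with hb
    set c := ∑ᶠ k, P j k * νW n k with hc
    have hac : a ≤ c := mono j _ _ fun k => le_trans (le_max_left _ _) (ih k).1
    have hbc : b ≤ c := mono j _ _ fun k => le_trans (le_max_right _ _) (ih k).1
    have hcab : c ≤ a + b := addle j _ _ _ fun k => (ih k).2
    have ha0 : 0 ≤ a := nonneg j _ (hWi_nonneg n)
    have hb0 : 0 ≤ b := nonneg j _ (hwi_nonneg n)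
    rw [hνWrec, hνWirec, hνwirec]
    by_cases hj : j = i
    · simp only [if_pos hj]
      rw [← hj]
      constructor
      · apply max_le
        · have : (0:ℝ) ≤ max (W j - c) 0 := le_max_right _ _
          linarith
        · have h1 : max (W j - b) 0 ≤ max (W j - c) 0 + (c - b) := by
            apply max_le
            · have : W j - c ≤ max (W j - c) 0 := le_max_left _ _
              linarith
            · have : (0:ℝ) ≤ max (W j - c) 0 := le_max_right _ _
              linarith
          linarith
      · have h1 : max (W j - c) 0 ≤ max (W j - b) 0 + max (a + b - c) 0 := by
          apply max_le
          · have h2 : W j - b ≤ max (W j - b) 0 := le_max_left _ _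
            have h3 : a + b - c ≤ max (a + b - c) 0 := le_max_left _ _
            have h4 : W j - c = (W j - b) + (b - c) := by ring
            nlinarith [le_max_right (W j - b) (0:ℝ), le_max_right (a+b-c) (0:ℝ)]
          · positivity
        have h5 : max (a + b - c) 0 = a + b - c := max_eq_left (by linarith)
        rw [h5] at h1
        linarith
    · simp only [if_neg hj]
      constructor
      · apply max_le
        · have h1 : max (W j - a) 0 ≤ max (W j - c) 0 + (c - a) := by
            apply max_le
            · have : W j - c ≤ max (W j - c) 0 := le_max_left _ _
              linarith
            · have : (0:ℝ) ≤ max (W j - c) 0 := le_max_right _ _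
              linarith
          linarith
        · have : (0:ℝ) ≤ max (W j - c) 0 := le_max_right _ _
          linarith
      · have h1 : max (W j - c) 0 ≤ max (W j - a) 0 + (a + b - c) := by
          apply max_le
          · have : W j - a ≤ max (W j - a) 0 := le_max_left _ _
            linarith
          · have : (0:ℝ) ≤ max (W j - a) 0 := le_max_right _ _
            linarith
        linarith
end

section
/- Let (μ_n)_{n≥0} be a sequence of nonnegative real numbers satisfying μ_n ≥ μ_{n−1} + G(μ_{n−1}) for all n ≥ 1, where G : [0,∞) → [0,∞) satisfies G(x) ≥ c e^{−c' x^α} for some constants c, c' > 0 and α ≥ 1. Then there exists a constant c'' > 0 such that μ_n ≥ c'' (log n)^{1/α} for all n ≥ 2. -/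
theorem stmt_11 (μ : ℕ → ℝ) (hμ : ∀ n, 0 ≤ μ n)
    (G : ℝ → ℝ) (hG0 : ∀ x, 0 ≤ x → 0 ≤ G x)
    (hGanti : ∀ x y, 0 ≤ x → x ≤ y → G y ≤ G x)
    (c c' α : ℝ) (hc : 0 < c) (hc' : 0 < c') (hα : 1 ≤ α)
    (hGlb : ∀ x, 0 ≤ x → c * Real.exp (-c' * x ^ α) ≤ G x)
    (hrec : ∀ n, 1 ≤ n → μ (n - 1) + G (μ (n - 1)) ≤ μ n) :
    ∃ c'' > 0, ∀ n : ℕ, 2 ≤ n → c'' * (Real.log n) ^ (1 / α) ≤ μ n := by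
  have hα0 : 0 < α := lt_of_lt_of_le one_pos hα
  -- Key lemma: for any x ≥ 0, μ n ≥ min x (n · c · e^{-c' x^α})
  have key : ∀ x : ℝ, 0 ≤ x → ∀ n : ℕ,
      min x ((n : ℝ) * (c * Real.exp (-c' * x ^ α))) ≤ μ n := by
    intro x hx n
    induction n with
    | zero =>
      have : min x ((0 : ℝ) * (c * Real.exp (-c' * x ^ α))) ≤ 0 := by
        simpa using min_le_right x 0
      simpa using le_trans this (hμ 0)
    | succ n ih =>
      have hGn := hG0 (μ n) (hμ n)
      have hstep : μ n + G (μ n) ≤ μ (n + 1) := by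
        have := hrec (n + 1) (by omega)
        simpa using this
      by_cases h : x ≤ μ n
      · exact le_trans (min_le_left _ _) (by linarith)
      · push_neg at h
        set e := c * Real.exp (-c' * x ^ α) with he
        have he0 : 0 < e := by positivity
        have hne : (n : ℝ) * e ≤ μ n := by
          rcases le_total ((n : ℝ) * e) x with h1 | h1
          · have hmin : min x ((n : ℝ) * e) = (n : ℝ) * e := min_eq_right h1
            rw [hmin] at ih; exact ih
          · exfalso
            have hmin : min x ((n : ℝ) * e) = x := min_eq_left h1
            rw [hmin] at ih; linarith
        have hGe : e ≤ G (μ n) := by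
          refine le_trans ?_ (hGlb (μ n) (hμ n))
          have hpow : μ n ^ α ≤ x ^ α := Real.rpow_le_rpow (hμ n) h.le hα0.le
          have hexp : -c' * x ^ α ≤ -c' * μ n ^ α := by nlinarith
          exact mul_le_mul_of_nonneg_left (Real.exp_le_exp.mpr hexp) hc.le
        refine le_trans (min_le_right _ _) ?_
        push_cast
        linarith
  -- choose constants
  set A := (1 / (2 * c')) ^ (1 / α) with hA
  have hA0 : 0 < A := Real.rpow_pos_of_pos (by positivity) _
  refine ⟨min A (c / 2), lt_min hA0 (by positivity), ?_⟩
  intro n hn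
  have hn1 : (1 : ℝ) < n := by exact_mod_cast Nat.lt_of_lt_of_le one_lt_two hn
  have hn0 : (0 : ℝ) < n := by linarith
  set L := Real.log n with hL
  have hL0 : 0 < L := Real.log_pos hn1
  set x := (L / (2 * c')) ^ (1 / α) with hx
  have hx0 : 0 ≤ x := Real.rpow_nonneg (by positivity) _
  have hxα : x ^ α = L / (2 * c') := by
    rw [hx, ← Real.rpow_mul (by positivity), one_div,
      inv_mul_cancel₀ (ne_of_gt hα0), Real.rpow_one]
  have hexp : (n : ℝ) * (c * Real.exp (-c' * x ^ α)) = c * Real.exp (L / 2) := by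
    rw [hxα, show -c' * (L / (2 * c')) = -(L / 2) from by field_simp,
      show (n : ℝ) = Real.exp L from (Real.exp_log hn0).symm,
      show Real.exp L * (c * Real.exp (-(L / 2))) =
        c * (Real.exp L * Real.exp (-(L / 2))) from by ring,
      ← Real.exp_add, show L + -(L / 2) = L / 2 from by ring]
  have hkey := key x hx0 n
  rw [hexp] at hkey
  refine le_trans (le_min ?_ ?_) hkey
  · -- min A (c/2) * L^{1/α} ≤ x
    have hxeq : x = L ^ (1 / α) * A := by
      rw [hx, hA, div_eq_mul_inv, ← one_div, Real.mul_rpow hL0.le (by positivity)]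
    rw [hxeq]
    calc min A (c / 2) * L ^ (1 / α) ≤ A * L ^ (1 / α) :=
          mul_le_mul_of_nonneg_right (min_le_left _ _) (Real.rpow_nonneg hL0.le _)
      _ = L ^ (1 / α) * A := by ring
  · -- min A (c/2) * L^{1/α} ≤ c * exp(L/2)
    have h1 : L ^ (1 / α) ≤ 2 + L := by
      rcases le_total L 1 with hL1 | hL1
      · have := Real.rpow_le_one hL0.le hL1 (by positivity : (0:ℝ) ≤ 1 / α)
        linarith
      · have h2 : L ^ (1 / α) ≤ L ^ (1 : ℝ) :=
          Real.rpow_le_rpow_of_exponent_le hL1 ((div_le_one hα0).mpr hα)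
        rw [Real.rpow_one] at h2
        linarith
    have h3 : L / 2 + 1 ≤ Real.exp (L / 2) := Real.add_one_le_exp _
    have h4 : L ^ (1 / α) ≤ 2 * Real.exp (L / 2) := by linarith
    calc min A (c / 2) * L ^ (1 / α) ≤ (c / 2) * L ^ (1 / α) :=
          mul_le_mul_of_nonneg_right (min_le_right _ _) (Real.rpow_nonneg hL0.le _)
      _ ≤ (c / 2) * (2 * Real.exp (L / 2)) :=
          mul_le_mul_of_nonneg_left h4 (by positivity)
      _ = c * Real.exp (L / 2) := by ring
end
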